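/- Let Π₁, Π₄ : ℝ³ → ℝ and Π₂, Π₃ : ℝ³ → ℝ² be surjective linear maps, and let V_j denote the range of the adjoint Π_j^* for j = 1,2,3,4. Assume V₄ ∩ V_j = {0} for j = 1,2,3, that V₂ = V₃, and that V₁ ⊄ V₂. Then there exist invertible linear maps B : ℝ³ → ℝ³, A₁, A₄ : ℝ → ℝ, and A₂, A₃ : ℝ² → ℝ² such that, writing points of ℝ³ as (x,y,t): A₁ ∘ Π₁ ∘ B = (the map (x,y,t) ↦ x+t), A₂ ∘ Π₂ ∘ B = A₃ ∘ Π₃ ∘ B = (the map (x,y,t) ↦ (x,y)), and A₄ ∘ Π₄ ∘ B = (the map (x,y,t) ↦ t); i.e., the datum is equivalent to the datum of the form Λ_{(4,0)}. -/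

import Mathlib

open LinearMap

lemma stmt16_ker_eq_ortho {E F : Type*} [NormedAddCommGroup E] [InnerProductSpace ℝ E]
    [NormedAddCommGroup F] [InnerProductSpace ℝ F] [FiniteDimensional ℝ E]
    [FiniteDimensional ℝ F] (P : E →ₗ[ℝ] F) :
    LinearMap.ker P = (LinearMap.range (LinearMap.adjoint P))ᗮ := by
  ext x
  simp only [LinearMap.mem_ker, Submodule.mem_orthogonal]
  constructor
  · rintro h u ⟨y, rfl⟩
    rw [LinearMap.adjoint_inner_left, h, inner_zero_right]
  · intro h
    have key : ∀ y : F, (inner ℝ y (P x) : ℝ) = 0 := by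
      intro y
      have := h (LinearMap.adjoint P y) ⟨y, rfl⟩
      rwa [LinearMap.adjoint_inner_left] at this
    refine ext_inner_left ℝ fun y => ?_
    rw [key y, inner_zero_right]

theorem stmt16
    (P₁ P₄ : EuclideanSpace ℝ (Fin 3) →ₗ[ℝ] ℝ)
    (P₂ P₃ : EuclideanSpace ℝ (Fin 3) →ₗ[ℝ] EuclideanSpace ℝ (Fin 2))
    (hs₁ : Function.Surjective P₁) (hs₂ : Function.Surjective P₂)
    (hs₃ : Function.Surjective P₃) (hs₄ : Function.Surjective P₄)
    (h41 : range (adjoint P₄) ⊓ range (adjoint P₁) = ⊥)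
    (h42 : range (adjoint P₄) ⊓ range (adjoint P₂) = ⊥)
    (h43 : range (adjoint P₄) ⊓ range (adjoint P₃) = ⊥)
    (h23 : range (adjoint P₂) = range (adjoint P₃))
    (h12 : ¬ range (adjoint P₁) ≤ range (adjoint P₂)) :
    ∃ (B : EuclideanSpace ℝ (Fin 3) ≃ₗ[ℝ] EuclideanSpace ℝ (Fin 3))
      (A₁ A₄ : ℝ ≃ₗ[ℝ] ℝ)
      (A₂ A₃ : EuclideanSpace ℝ (Fin 2) ≃ₗ[ℝ] EuclideanSpace ℝ (Fin 2)),
      (∀ v : EuclideanSpace ℝ (Fin 3), A₁ (P₁ (B v)) = v 0 + v 2) ∧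
      (∀ v : EuclideanSpace ℝ (Fin 3),
        A₂ (P₂ (B v)) 0 = v 0 ∧ A₂ (P₂ (B v)) 1 = v 1) ∧
      (∀ v : EuclideanSpace ℝ (Fin 3),
        A₃ (P₃ (B v)) 0 = v 0 ∧ A₃ (P₃ (B v)) 1 = v 1) ∧
      (∀ v : EuclideanSpace ℝ (Fin 3), A₄ (P₄ (B v)) = v 2) := by
  classical
  have hdim3 : Module.finrank ℝ (EuclideanSpace ℝ (Fin 3)) = 3 := by simp
  have hdim2 : Module.finrank ℝ (EuclideanSpace ℝ (Fin 2)) = 2 := by simp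
  -- orthogonal complements
  have hV1 : (LinearMap.ker P₁)ᗮ = range (adjoint P₁) := by
    rw [stmt16_ker_eq_ortho, Submodule.orthogonal_orthogonal]
  have hV2 : (LinearMap.ker P₂)ᗮ = range (adjoint P₂) := by
    rw [stmt16_ker_eq_ortho, Submodule.orthogonal_orthogonal]
  have hV4 : (LinearMap.ker P₄)ᗮ = range (adjoint P₄) := by
    rw [stmt16_ker_eq_ortho, Submodule.orthogonal_orthogonal]
  have hk23 : LinearMap.ker P₂ = LinearMap.ker P₃ := by
    rw [stmt16_ker_eq_ortho P₂, stmt16_ker_eq_ortho P₃, h23]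
  have hV4ne : range (adjoint P₄) ≠ ⊥ := by
    intro h
    have hk : LinearMap.ker P₄ = ⊤ := by
      rw [stmt16_ker_eq_ortho, h, Submodule.bot_orthogonal_eq_top]
    obtain ⟨x, hx⟩ := hs₄ 1
    have : P₄ x = 0 := by rw [LinearMap.ker_eq_top.mp hk]; rfl
    rw [hx] at this; exact one_ne_zero this
  have hne14 : LinearMap.ker P₄ ≠ LinearMap.ker P₁ := by
    intro h
    have heq : range (adjoint P₄) = range (adjoint P₁) := by rw [← hV4, ← hV1, h]
    exact hV4ne (by rw [← h41, heq, inf_idem])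
  have hn24 : ¬ LinearMap.ker P₂ ≤ LinearMap.ker P₄ := by
    intro hle
    have : range (adjoint P₄) ≤ range (adjoint P₂) := by
      rw [← hV4, ← hV2]; exact Submodule.orthogonal_le hle
    exact hV4ne (by rw [← h42, inf_eq_left.mpr this])
  have hn21 : ¬ LinearMap.ker P₂ ≤ LinearMap.ker P₁ := by
    intro hle
    exact h12 (by rw [← hV1, ← hV2]; exact Submodule.orthogonal_le hle)
  -- kernel dimensions
  have hk2 : Module.finrank ℝ (LinearMap.ker P₂) = 1 := by
    have := LinearMap.finrank_range_add_finrank_ker P₂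
    rw [LinearMap.range_eq_top.mpr hs₂, finrank_top, hdim2, hdim3] at this; omega
  have hk1 : Module.finrank ℝ (LinearMap.ker P₁) = 2 := by
    have := LinearMap.finrank_range_add_finrank_ker P₁
    rw [LinearMap.range_eq_top.mpr hs₁, finrank_top, hdim3, Module.finrank_self] at this
    omega
  have hk4 : Module.finrank ℝ (LinearMap.ker P₄) = 2 := by
    have := LinearMap.finrank_range_add_finrank_ker P₄
    rw [LinearMap.range_eq_top.mpr hs₄, finrank_top, hdim3, Module.finrank_self] at this
    omega
  -- get w spanning ker P₂
  obtain ⟨w, hw2, hw0⟩ := Submodule.exists_mem_ne_zero_of_ne_bot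
    (p := LinearMap.ker P₂) (by
      intro h; rw [h] at hk2; simp [finrank_bot] at hk2)
  have hspan : LinearMap.ker P₂ = Submodule.span ℝ {w} := by
    refine (Submodule.eq_of_le_of_finrank_eq ?_ ?_).symm
    · exact Submodule.span_le.mpr (by simpa using hw2)
    · rw [finrank_span_singleton hw0, hk2]
  have hP4w : P₄ w ≠ 0 := by
    intro h
    exact hn24 (by
      rw [hspan]
      exact Submodule.span_le.mpr (by simpa [LinearMap.mem_ker] using h))
  have hP1w : P₁ w ≠ 0 := by
    intro h
    exact hn21 (by
      rw [hspan]
      exact Submodule.span_le.mpr (by simpa [LinearMap.mem_ker] using h))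
  -- b₁ : nonzero vector in ker P₁ ⊓ ker P₄
  obtain ⟨b₁, hb₁mem, hb₁0⟩ := Submodule.exists_mem_ne_zero_of_ne_bot
    (p := LinearMap.ker P₁ ⊓ LinearMap.ker P₄) (by
      intro h
      have hsum := Submodule.finrank_sup_add_finrank_inf_eq
        (LinearMap.ker P₁) (LinearMap.ker P₄)
      have hsup : Module.finrank ℝ
          (LinearMap.ker P₁ ⊔ LinearMap.ker P₄ : Submodule ℝ (EuclideanSpace ℝ (Fin 3))) ≤ 3 :=
        le_trans (Submodule.finrank_le _) (le_of_eq hdim3)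
      rw [h, hk1, hk4] at hsum
      simp [finrank_bot] at hsum
      omega)
  have hP1b₁ : P₁ b₁ = 0 := hb₁mem.1
  have hP4b₁ : P₄ b₁ = 0 := hb₁mem.2
  -- u ∈ ker P₄ with P₁ u ≠ 0
  obtain ⟨u, hu4, hu1⟩ : ∃ u, P₄ u = 0 ∧ P₁ u ≠ 0 := by
    by_contra hc
    push_neg at hc
    refine hne14 (Submodule.eq_of_le_of_finrank_eq ?_ (by rw [hk4, hk1]))
    intro x hx
    exact hc x hx
  obtain ⟨b₀, hP4b₀, hP1b₀⟩ : ∃ b₀ : EuclideanSpace ℝ (Fin 3), P₄ b₀ = 0 ∧ P₁ b₀ = P₁ w :=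
    ⟨(P₁ w / P₁ u) • u, by simp [map_smul, hu4], by
      simp only [map_smul, smul_eq_mul]
      field_simp⟩
  -- linear independence of b₀, b₁, w
  have hli : LinearIndependent ℝ ![b₀, b₁, w] := by
    rw [Fintype.linearIndependent_iff]
    intro g hg
    rw [Fin.sum_univ_three] at hg
    simp only [Matrix.cons_val_zero, Matrix.cons_val_one, Matrix.head_cons,
      Matrix.cons_val_two, Matrix.tail_cons] at hg
    have h2 : g 2 = 0 := by
      have := congrArg P₄ hg
      simpa [map_add, map_smul, hP4b₀, hP4b₁, smul_eq_mul, hP4w, mul_eq_zero] using this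
    have h0 : g 0 = 0 := by
      have := congrArg P₁ hg
      simpa [map_add, map_smul, hP1b₀, hP1b₁, h2, smul_eq_mul, hP1w, mul_eq_zero] using this
    have h1 : g 1 = 0 := by
      rw [h0, h2, zero_smul, zero_smul, zero_add, add_zero] at hg
      simpa [smul_eq_zero, hb₁0] using hg
    intro i; fin_cases i <;> assumption
  have hcard3 : Fintype.card (Fin 3) = Module.finrank ℝ (EuclideanSpace ℝ (Fin 3)) := by
    simp [hdim3]
  let bB : Module.Basis (Fin 3) ℝ (EuclideanSpace ℝ (Fin 3)) :=
    basisOfLinearIndependentOfCardEqFinrank hli hcard3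
  have hbB : ∀ i, bB i = ![b₀, b₁, w] i := fun i =>
    congrFun (coe_basisOfLinearIndependentOfCardEqFinrank hli hcard3) i
  let e3 := PiLp.basisFun 2 ℝ (Fin 3)
  let B := e3.equiv bB (Equiv.refl _)
  have hBv : ∀ v : EuclideanSpace ℝ (Fin 3), B v = v 0 • b₀ + v 1 • b₁ + v 2 • w := by
    intro v
    have hv : v = v 0 • e3 0 + v 1 • e3 1 + v 2 • e3 2 := by
      have := e3.sum_repr v
      rw [Fin.sum_univ_three] at this
      simp only [PiLp.basisFun_repr, e3] at this
      exact this.symm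
    conv_lhs => rw [hv]
    simp only [map_add, map_smul, B, Module.Basis.equiv_apply, Equiv.refl_apply]
    rw [hbB 0, hbB 1, hbB 2]
    simp
  -- the construction for the two-dimensional targets
  have key : ∀ Q : EuclideanSpace ℝ (Fin 3) →ₗ[ℝ] EuclideanSpace ℝ (Fin 2),
      LinearMap.ker Q = LinearMap.ker P₂ →
      ∃ A : EuclideanSpace ℝ (Fin 2) ≃ₗ[ℝ] EuclideanSpace ℝ (Fin 2),
        ∀ v : EuclideanSpace ℝ (Fin 3), A (Q (B v)) 0 = v 0 ∧ A (Q (B v)) 1 = v 1 := by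
    intro Q hkQ
    have hQw : Q w = 0 := by rw [← LinearMap.mem_ker, hkQ]; exact hw2
    have hli2 : LinearIndependent ℝ ![Q b₀, Q b₁] := by
      rw [Fintype.linearIndependent_iff]
      intro g hg
      rw [Fin.sum_univ_two] at hg
      simp only [Matrix.cons_val_zero, Matrix.cons_val_one, Matrix.head_cons] at hg
      have hmem : g 0 • b₀ + g 1 • b₁ ∈ LinearMap.ker Q := by
        rw [LinearMap.mem_ker, map_add, map_smul, map_smul]
        exact hg
      rw [hkQ, hspan, Submodule.mem_span_singleton] at hmem
      obtain ⟨d, hd⟩ := hmem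
      have hd0 : d = 0 := by
        have := congrArg P₄ hd
        simpa [map_add, map_smul, hP4b₀, hP4b₁, smul_eq_mul, hP4w, mul_eq_zero,
          eq_comm] using this
      rw [hd0, zero_smul] at hd
      have h0 : g 0 = 0 := by
        have := congrArg P₁ hd.symm
        simpa [map_add, map_smul, hP1b₀, hP1b₁, smul_eq_mul, hP1w, mul_eq_zero] using this
      have h1 : g 1 = 0 := by
        rw [h0, zero_smul, zero_add] at hd
        simpa [smul_eq_zero, hb₁0] using hd.symm
      intro i; fin_cases i <;> assumption
    have hcard2 : Fintype.card (Fin 2) = Module.finrank ℝ (EuclideanSpace ℝ (Fin 2)) := by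
      simp [hdim2]
    let cB : Module.Basis (Fin 2) ℝ (EuclideanSpace ℝ (Fin 2)) :=
      basisOfLinearIndependentOfCardEqFinrank hli2 hcard2
    have hcB : ∀ i, cB i = ![Q b₀, Q b₁] i := fun i =>
      congrFun (coe_basisOfLinearIndependentOfCardEqFinrank hli2 hcard2) i
    let e2 := PiLp.basisFun 2 ℝ (Fin 2)
    refine ⟨cB.equiv e2 (Equiv.refl _), fun v => ?_⟩
    have hQB : Q (B v) = v 0 • cB 0 + v 1 • cB 1 := by
      rw [hBv v]
      rw [hcB 0, hcB 1]
      simp [map_add, map_smul, hQw]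
    rw [hQB]
    simp only [map_add, map_smul, Module.Basis.equiv_apply, Equiv.refl_apply]
    have he2 : ∀ i j : Fin 2, e2 i j = if j = i then 1 else 0 := by
      intro i j
      simp [e2, PiLp.basisFun_apply, PiLp.toLp_apply, Pi.single_apply]
    constructor <;>
      simp [PiLp.add_apply, PiLp.smul_apply, he2, smul_eq_mul]
  obtain ⟨A₂, hA₂⟩ := key P₂ rfl
  obtain ⟨A₃, hA₃⟩ := key P₃ hk23.symm
  refine ⟨B, LinearEquiv.smulOfNeZero ℝ ℝ (P₁ w)⁻¹ (inv_ne_zero hP1w),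
    LinearEquiv.smulOfNeZero ℝ ℝ (P₄ w)⁻¹ (inv_ne_zero hP4w), A₂, A₃, ?_, hA₂, hA₃, ?_⟩
  · intro v
    rw [hBv v]
    simp only [map_add, map_smul, hP1b₀, hP1b₁, LinearEquiv.smulOfNeZero_apply,
      smul_eq_mul, mul_zero, add_zero]
    field_simp
  · intro v
    rw [hBv v]
    simp only [map_add, map_smul, hP4b₀, hP4b₁, LinearEquiv.smulOfNeZero_apply,
      smul_eq_mul, mul_zero, add_zero, zero_add]
    field_simp
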